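/- Let I, I' ∈ ℝ^{(N+1)×3} both have full column rank 3. Given vectors f, f̃ ∈ ℝ^{N+1}, set h₀ = I'(I'ᵀI')^{-1} Iᵀ f and P = Id - I'(I'ᵀI')^{-1} I'ᵀ. If ‖h₀‖ ≤ ‖f‖ and P f̃ ≠ 0, then h* = h₀ + α P f̃ with α = √(‖f‖² - ‖h₀‖²)/‖P f̃‖ satisfies the constraints I'ᵀ h* = Iᵀ f and ‖h*‖ = ‖f‖, and minimizes ‖h - f̃‖ over all h satisfying these two constraints. -/

import Mathlib

open Matrix

/-- View a plain vector as an element of Euclidean space (same underlying function). -/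
def toE {n : ℕ} (v : Fin n → ℝ) : EuclideanSpace ℝ (Fin n) := WithLp.toLp 2 v

lemma aux_isUnit_of_rank {m n : ℕ} (A : Matrix (Fin m) (Fin n) ℝ) (h : A.rank = n) :
    IsUnit (Aᵀ * A) := by
  rw [← Matrix.mulVec_surjective_iff_isUnit]
  have hr : (Aᵀ * A).rank = n := by rw [Matrix.rank_transpose_mul_self, h]
  have htop : LinearMap.range (Aᵀ * A).mulVecLin = ⊤ := by
    apply Submodule.eq_top_of_finrank_eq
    rw [← Matrix.rank, hr]
    simp [Module.finrank_fintype_fun_eq_card]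
  exact fun y => LinearMap.range_eq_top.mp htop y

lemma aux_inner_dot {n : ℕ} (x y : EuclideanSpace ℝ (Fin n)) :
    (inner ℝ x y : ℝ) = (x : Fin n → ℝ) ⬝ᵥ (y : Fin n → ℝ) := by
  simp [PiLp.inner_apply, dotProduct, RCLike.inner_apply, mul_comm]

theorem conservative_projection_minimizer (N : ℕ)
    (I I' : Matrix (Fin (N + 1)) (Fin 3) ℝ) (hI : I.rank = 3) (hI' : I'.rank = 3)
    (f ft : EuclideanSpace ℝ (Fin (N + 1)))
    (h₀ : EuclideanSpace ℝ (Fin (N + 1)))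
    (hh₀ : h₀ = toE ((I' * (I'ᵀ * I')⁻¹ * Iᵀ).mulVec f))
    (P : Matrix (Fin (N + 1)) (Fin (N + 1)) ℝ)
    (hP : P = 1 - I' * (I'ᵀ * I')⁻¹ * I'ᵀ)
    (hcons : ‖h₀‖ ≤ ‖f‖)
    (hPf : toE (P.mulVec ft) ≠ 0)
    (α : ℝ)
    (hα : α = Real.sqrt (‖f‖ ^ 2 - ‖h₀‖ ^ 2) /
      ‖toE (P.mulVec ft)‖)
    (hstar : EuclideanSpace ℝ (Fin (N + 1)))
    (hhstar : hstar = h₀ + α • toE (P.mulVec ft)) :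
    I'ᵀ.mulVec hstar = Iᵀ.mulVec f ∧ ‖hstar‖ = ‖f‖ ∧
    ∀ h : EuclideanSpace ℝ (Fin (N + 1)),
      I'ᵀ.mulVec h = Iᵀ.mulVec f → ‖h‖ = ‖f‖ → ‖hstar - ft‖ ≤ ‖h - ft‖ := by
  have hG : IsUnit ((I'ᵀ * I').det) :=
    (Matrix.isUnit_iff_isUnit_det _).mp (aux_isUnit_of_rank I' hI')
  -- key matrix identities
  have K1 : I'ᵀ * (I' * (I'ᵀ * I')⁻¹ * Iᵀ) = Iᵀ := by
    have : I'ᵀ * (I' * (I'ᵀ * I')⁻¹ * Iᵀ) = (I'ᵀ * I') * (I'ᵀ * I')⁻¹ * Iᵀ := by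
      simp only [Matrix.mul_assoc]
    rw [this, Matrix.mul_nonsing_inv _ hG, Matrix.one_mul]
  have K2 : I'ᵀ * P = 0 := by
    rw [hP, Matrix.mul_sub, Matrix.mul_one]
    have : I'ᵀ * (I' * (I'ᵀ * I')⁻¹ * I'ᵀ) = I'ᵀ := by
      have h2 : I'ᵀ * (I' * (I'ᵀ * I')⁻¹ * I'ᵀ) = (I'ᵀ * I') * (I'ᵀ * I')⁻¹ * I'ᵀ := by
        simp only [Matrix.mul_assoc]
      rw [h2, Matrix.mul_nonsing_inv _ hG, Matrix.one_mul]
    rw [show I'ᵀ - I'ᵀ * (I' * (I'ᵀ * I')⁻¹ * I'ᵀ) = I'ᵀ - I'ᵀ by rw [this], sub_self]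
  have K3 : P * I' = 0 := by
    rw [hP]
    have : (I' * (I'ᵀ * I')⁻¹ * I'ᵀ) * I' = I' * ((I'ᵀ * I')⁻¹ * (I'ᵀ * I')) := by
      simp only [Matrix.mul_assoc]
    rw [Matrix.sub_mul, Matrix.one_mul, this, Matrix.nonsing_inv_mul _ hG,
        Matrix.mul_one, sub_self]
  have K4 : Pᵀ = P := by
    have hsym : ((I'ᵀ * I')⁻¹)ᵀ = (I'ᵀ * I')⁻¹ := by
      rw [Matrix.transpose_nonsing_inv, Matrix.transpose_mul, Matrix.transpose_transpose]
    rw [hP]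
    simp [Matrix.transpose_sub, Matrix.transpose_mul, hsym, Matrix.mul_assoc]
  have K5 : P * P = P := by
    calc P * P = P * 1 - (P * I') * ((I'ᵀ * I')⁻¹ * I'ᵀ) := by
          rw [hP]; rw [Matrix.mul_sub]; simp only [Matrix.mul_assoc]
    _ = P := by rw [K3, Matrix.zero_mul, Matrix.mul_one, sub_zero]
  have K6 : P * (I' * (I'ᵀ * I')⁻¹ * Iᵀ) = 0 := by
    have : P * (I' * (I'ᵀ * I')⁻¹ * Iᵀ) = (P * I') * ((I'ᵀ * I')⁻¹ * Iᵀ) := by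
      simp only [Matrix.mul_assoc]
    rw [this, K3, Matrix.zero_mul]
  -- abbreviation
  set p : EuclideanSpace ℝ (Fin (N + 1)) := toE (P.mulVec ft) with hp
  -- symmetry of P at the dot-product level
  have hsymdot : ∀ x y : Fin (N + 1) → ℝ, x ⬝ᵥ (P.mulVec y) = (P.mulVec x) ⬝ᵥ y := by
    intro x y
    rw [Matrix.dotProduct_mulVec, ← Matrix.mulVec_transpose, K4]
  -- constraint facts
  have Fh₀ : I'ᵀ.mulVec h₀ = Iᵀ.mulVec f := by
    rw [hh₀]
    show I'ᵀ.mulVec ((I' * (I'ᵀ * I')⁻¹ * Iᵀ).mulVec f) = Iᵀ.mulVec f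
    rw [Matrix.mulVec_mulVec, K1]
  have Fp : I'ᵀ.mulVec (P.mulVec ft) = 0 := by
    rw [Matrix.mulVec_mulVec, K2, Matrix.zero_mulVec]
  have FPh₀ : P.mulVec h₀ = 0 := by
    rw [hh₀]
    show P.mulVec ((I' * (I'ᵀ * I')⁻¹ * Iᵀ).mulVec f) = 0
    rw [Matrix.mulVec_mulVec, K6, Matrix.zero_mulVec]
  -- orthogonality : ⟪h₀, p⟫ = 0
  have hO1 : (inner ℝ h₀ p : ℝ) = 0 := by
    rw [aux_inner_dot]
    show (h₀ : Fin (N + 1) → ℝ) ⬝ᵥ (P.mulVec ft) = 0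
    rw [hsymdot, FPh₀, zero_dotProduct]
  -- ⟪p, ft⟫ = ‖p‖²
  have hO2 : (inner ℝ p (ft : EuclideanSpace ℝ (Fin (N + 1))) : ℝ) = ‖p‖ ^ 2 := by
    have h1 : (inner ℝ p p : ℝ) = (inner ℝ p ft : ℝ) := by
      rw [aux_inner_dot, aux_inner_dot]
      show (p : Fin (N + 1) → ℝ) ⬝ᵥ (P.mulVec ft) = (p : Fin (N + 1) → ℝ) ⬝ᵥ (ft : Fin (N + 1) → ℝ)
      rw [hsymdot]
      show (P.mulVec (P.mulVec ft)) ⬝ᵥ _ = _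
      rw [Matrix.mulVec_mulVec, K5]
      exact rfl
    rw [← h1, real_inner_self_eq_norm_sq]
  have hpnorm : 0 < ‖p‖ := norm_pos_iff.mpr hPf
  have hD : 0 ≤ ‖f‖ ^ 2 - ‖h₀‖ ^ 2 := by
    have := pow_le_pow_left₀ (norm_nonneg h₀) hcons 2
    linarith
  have hα0 : 0 ≤ α := by
    rw [hα]; positivity
  have hα2 : α ^ 2 * ‖p‖ ^ 2 = ‖f‖ ^ 2 - ‖h₀‖ ^ 2 := by
    rw [hα, div_pow, Real.sq_sqrt hD, div_mul_cancel₀]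
    positivity
  -- norm of hstar
  have hns : ‖hstar‖ ^ 2 = ‖f‖ ^ 2 := by
    rw [hhstar, norm_add_sq_real, real_inner_smul_right, hO1, norm_smul,
      Real.norm_eq_abs, mul_pow, sq_abs, hα2]
    ring
  have hnormstar : ‖hstar‖ = ‖f‖ := by
    have h1 : ‖hstar‖ = Real.sqrt (‖hstar‖ ^ 2) := (Real.sqrt_sq (norm_nonneg _)).symm
    rw [h1, hns, Real.sqrt_sq (norm_nonneg _)]
  -- constraint for hstar
  have hc1 : I'ᵀ.mulVec hstar = Iᵀ.mulVec f := by
    rw [hhstar, WithLp.ofLp_add, WithLp.ofLp_smul, Matrix.mulVec_add, Matrix.mulVec_smul, Fh₀]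
    show Iᵀ.mulVec f + α • (I'ᵀ.mulVec (P.mulVec ft)) = Iᵀ.mulVec f
    rw [Fp, smul_zero, add_zero]
  refine ⟨hc1, hnormstar, ?_⟩
  -- minimality
  intro h hc hn
  set d : EuclideanSpace ℝ (Fin (N + 1)) := h - h₀ with hd
  have hdnull : I'ᵀ.mulVec d = 0 := by
    rw [hd, WithLp.ofLp_sub, Matrix.mulVec_sub, hc, Fh₀, sub_self]
  have hPd : P.mulVec d = (d : Fin (N + 1) → ℝ) := by
    rw [hP, Matrix.sub_mulVec, Matrix.one_mulVec]
    have : (I' * (I'ᵀ * I')⁻¹ * I'ᵀ).mulVec d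
        = (I' * (I'ᵀ * I')⁻¹).mulVec (I'ᵀ.mulVec d) := by
      rw [Matrix.mulVec_mulVec]
    rw [this, hdnull, Matrix.mulVec_zero, sub_zero]
  -- ⟪d, h₀⟫ = 0
  have hdh₀ : (inner ℝ d h₀ : ℝ) = 0 := by
    rw [real_inner_comm, aux_inner_dot]
    show (h₀ : Fin (N + 1) → ℝ) ⬝ᵥ (d : Fin (N + 1) → ℝ) = 0
    have : (h₀ : Fin (N + 1) → ℝ) ⬝ᵥ (d : Fin (N + 1) → ℝ)
        = (h₀ : Fin (N + 1) → ℝ) ⬝ᵥ (P.mulVec d) := by rw [hPd]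
    rw [this, hsymdot, FPh₀, zero_dotProduct]
  -- ⟪d, ft⟫ = ⟪d, p⟫
  have hdft : (inner ℝ d (ft : EuclideanSpace ℝ (Fin (N + 1))) : ℝ) = (inner ℝ d p : ℝ) := by
    rw [aux_inner_dot, aux_inner_dot]
    show (d : Fin (N + 1) → ℝ) ⬝ᵥ (ft : Fin (N + 1) → ℝ)
        = (d : Fin (N + 1) → ℝ) ⬝ᵥ (P.mulVec ft)
    rw [hsymdot, hPd]
  -- ‖d‖² = ‖f‖² − ‖h₀‖²
  have hdn : ‖d‖ ^ 2 = ‖f‖ ^ 2 - ‖h₀‖ ^ 2 := by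
    have hhd : h = h₀ + d := by rw [hd]; abel
    have : ‖h‖ ^ 2 = ‖h₀‖ ^ 2 + 2 * (inner ℝ h₀ d : ℝ) + ‖d‖ ^ 2 := by
      rw [hhd] at hn ⊢; exact norm_add_sq_real h₀ d
    rw [real_inner_comm, hdh₀] at this
    rw [hn] at this
    linarith
  -- ⟪d, p⟫ ≤ α ‖p‖²
  have hcauchy : (inner ℝ d p : ℝ) ≤ α * ‖p‖ ^ 2 := by
    have h1 : (inner ℝ d p : ℝ) ≤ ‖d‖ * ‖p‖ := real_inner_le_norm d p
    have h2 : ‖d‖ = Real.sqrt (‖f‖ ^ 2 - ‖h₀‖ ^ 2) := by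
      rw [← hdn, Real.sqrt_sq (norm_nonneg _)]
    have h3 : α * ‖p‖ ^ 2 = Real.sqrt (‖f‖ ^ 2 - ‖h₀‖ ^ 2) * ‖p‖ := by
      rw [hα]; field_simp
    rw [h3, ← h2]
    exact h1
  -- inner products with ft
  have hinner_star : (inner ℝ hstar (ft : EuclideanSpace ℝ (Fin (N + 1))) : ℝ)
      = (inner ℝ h₀ (ft : EuclideanSpace ℝ (Fin (N + 1))) : ℝ) + α * ‖p‖ ^ 2 := by
    rw [hhstar, inner_add_left, real_inner_smul_left, hO2]
  have hinner_h : (inner ℝ h (ft : EuclideanSpace ℝ (Fin (N + 1))) : ℝ)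
      = (inner ℝ h₀ (ft : EuclideanSpace ℝ (Fin (N + 1))) : ℝ) + (inner ℝ d p : ℝ) := by
    have hhd : h = h₀ + d := by rw [hd]; abel
    rw [hhd, inner_add_left, hdft]
  have hkey : (inner ℝ h (ft : EuclideanSpace ℝ (Fin (N + 1))) : ℝ)
      ≤ (inner ℝ hstar (ft : EuclideanSpace ℝ (Fin (N + 1))) : ℝ) := by
    rw [hinner_star, hinner_h]
    linarith
  -- conclude via squared norms
  have hsq : ‖hstar - ft‖ ^ 2 ≤ ‖h - ft‖ ^ 2 := by
    rw [norm_sub_sq_real, norm_sub_sq_real, hnormstar, hn]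
    linarith
  calc ‖hstar - ft‖ = Real.sqrt (‖hstar - ft‖ ^ 2) := (Real.sqrt_sq (norm_nonneg _)).symm
    _ ≤ Real.sqrt (‖h - ft‖ ^ 2) := Real.sqrt_le_sqrt hsq
    _ = ‖h - ft‖ := Real.sqrt_sq (norm_nonneg _)
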